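/- Suppose Λ(D, b) is nonempty. Then the set { σ(D, q^ℓ, b_ℓ)/ℓ : ℓ ∈ Λ(D, b) } admits a minimum, and this minimum is attained at some ℓ ∈ Λ(D, b) with ℓ ≤ ∏_{j=1}^m (D_j^+ − D_j^- + 1). Equivalently, there exists ℓ₀ ∈ Λ(D, b) with ℓ₀ ≤ ∏_{j=1}^m (D_j^+ − D_j^- + 1) such that σ(D, q^h, b_h)/h ≥ σ(D, q^{ℓ₀}, b_{ℓ₀})/ℓ₀ for every h ∈ Λ(D, b). -/

import Mathlib

open Finset

/-- `Lset q ℓ d b` is the set `L(D, q^ℓ, b_ℓ)`. -/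
def Lset (q ℓ : ℕ) {m n : ℕ} (d : Fin n → Fin m → ℤ) (b : Fin m → ℤ) : Set (Fin n → ℕ) :=
  {u | (∀ i, u i ≤ q ^ ℓ - 1) ∧
    ∀ j, ((q : ℤ) ^ ℓ - 1) ∣
      (∑ i, (u i : ℤ) * d i j + ((q : ℤ) ^ ℓ - 1) / ((q : ℤ) - 1) * b j)}

/-- `Λ(D, b)` is the set of `ℓ ≥ 1` with `L(D, q^ℓ, b_ℓ)` nonempty. -/
def Lambda (q : ℕ) {m n : ℕ} (d : Fin n → Fin m → ℤ) (b : Fin m → ℤ) : Set ℕ :=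
  {ℓ | 1 ≤ ℓ ∧ (Lset q ℓ d b).Nonempty}

/-- `σ_p` of a tuple: the sum over the coordinates of the base-`p` digit sums. -/
def sigmaTuple (p : ℕ) {n : ℕ} (u : Fin n → ℕ) : ℕ :=
  ∑ i, (Nat.digits p (u i)).sum

/-- `σ(D, q^ℓ, b_ℓ) = min { σ_p(u) : u ∈ L(D, q^ℓ, b_ℓ) }`. -/
noncomputable def sigmaMin (p q ℓ : ℕ) {m n : ℕ} (d : Fin n → Fin m → ℤ)
    (b : Fin m → ℤ) : ℕ :=
  sInf (sigmaTuple p '' Lset q ℓ d b)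

/-! Write `u ∈ L(D, q^ℓ, b_ℓ)` in base `q` and let `c` be the carry with
`∑ u_i d_i + b_ℓ = (q^ℓ - 1) c`. The carries `θ_t` out of the lowest `t` digits, `1 ≤ t ≤ ℓ`,
all lie in the box `∏_j [D_j^-, D_j^+]`, so once `ℓ` exceeds its size two of them coincide,
`θ_t = θ_{t+k}`. Cutting the digits `t, …, t+k-1` out of every `u_i` then yields solutions of
lengths `k` and `ℓ - k` whose `p`-digit sums add up to `σ_p(u)`, because `q` is a power of `p`.
So every `ℓ ∈ Λ` beyond the bound splits as `ℓ₁ + ℓ₂` with `σ(ℓ₁) + σ(ℓ₂) ≤ σ(ℓ)`, and the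
mediant inequality shows that `σ(ℓ)/ℓ` is at least the minimum of the ratio over
`ℓ ≤ ∏_j (D_j^+ - D_j^- + 1)`.
-/

theorem Nat.digits_sum_add_pow_mul {p K a : ℕ} (hp : 1 < p) (ha : a < p ^ K) (r : ℕ) :
    (Nat.digits p (a + p ^ K * r)).sum = (Nat.digits p a).sum + (Nat.digits p r).sum := by
  rcases Nat.eq_zero_or_pos r with rfl | hr
  · simp
  obtain ⟨k, hk⟩ := Nat.exists_eq_add_of_le ((Nat.digits_length_le_iff hp a).mpr ha)
  rw [hk, ← Nat.digits_append_zeroes_append_digits hp hr]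
  simp

theorem sigmaTuple_add_pow_mul {p f q t n : ℕ} (hp : 1 < p) (hq : q = p ^ f)
    {v : Fin n → ℕ} (hv : ∀ i, v i < q ^ t) (w : Fin n → ℕ) :
    sigmaTuple p (fun i => v i + q ^ t * w i) = sigmaTuple p v + sigmaTuple p w := by
  subst hq
  simp only [sigmaTuple, ← Finset.sum_add_distrib, ← pow_mul]
  exact Finset.sum_congr rfl fun i _ =>
    Nat.digits_sum_add_pow_mul hp (by simpa [pow_mul] using hv i) (w i)

theorem sigmaTuple_mod_add_div {p f q n : ℕ} (hp : 1 < p) (hq : q = p ^ f) (u : Fin n → ℕ)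
    (t : ℕ) :
    sigmaTuple p u = sigmaTuple p (fun i => u i % q ^ t) + sigmaTuple p (fun i => u i / q ^ t) := by
  have hpos : 0 < q ^ t := by subst hq; positivity
  simpa only [Nat.mod_add_div] using
    sigmaTuple_add_pow_mul hp hq (fun i => Nat.mod_lt (u i) hpos) (fun i => u i / q ^ t)

theorem exists_le_forall_div_le_of_split {Λ : Set ℕ} (hΛ : ∀ ℓ ∈ Λ, 0 < ℓ) (s : ℕ → ℕ) (P : ℕ)
    (hsplit : ∀ ℓ ∈ Λ, P < ℓ → ∃ ℓ₁ ∈ Λ, ∃ ℓ₂ ∈ Λ, ℓ₁ + ℓ₂ = ℓ ∧ s ℓ₁ + s ℓ₂ ≤ s ℓ)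
    (hne : Λ.Nonempty) :
    ∃ ℓ₀ ∈ Λ, ℓ₀ ≤ P ∧ ∀ h ∈ Λ, (s ℓ₀ : ℚ) / ℓ₀ ≤ s h / h := by
  have hsmall : ∀ ℓ ∈ Λ, ∃ ℓ' ∈ Λ, ℓ' ≤ P := by
    intro ℓ
    induction ℓ using Nat.strong_induction_on with
    | _ ℓ ih =>
      intro hℓ
      by_cases hle : ℓ ≤ P
      · exact ⟨ℓ, hℓ, hle⟩
      obtain ⟨ℓ₁, h₁, ℓ₂, h₂, hsum, -⟩ := hsplit ℓ hℓ (by omega)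
      exact ih ℓ₁ (by have := hΛ ℓ₂ h₂; omega) h₁
  obtain ⟨ℓ, hℓ⟩ := hne
  obtain ⟨ℓ₀, ⟨hℓ₀, hℓ₀P⟩, hmin⟩ := Set.exists_min_image {ℓ | ℓ ∈ Λ ∧ ℓ ≤ P}
    (fun ℓ => (s ℓ : ℚ) / ℓ) ((Set.finite_Iic P).subset fun _ h => h.2) (hsmall ℓ hℓ)
  refine ⟨ℓ₀, hℓ₀, hℓ₀P, fun h hh => ?_⟩
  induction h using Nat.strong_induction_on with
  | _ h ih =>
    by_cases hle : h ≤ P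
    · exact hmin h ⟨hh, hle⟩
    obtain ⟨ℓ₁, h₁, ℓ₂, h₂, hsum, hs⟩ := hsplit h hh (by omega)
    have pos₁ : (0 : ℚ) < ℓ₁ := by exact_mod_cast hΛ ℓ₁ h₁
    have pos₂ : (0 : ℚ) < ℓ₂ := by exact_mod_cast hΛ ℓ₂ h₂
    have ih₁ := (le_div_iff₀ pos₁).mp (ih ℓ₁ (by have := hΛ ℓ₂ h₂; omega) h₁)
    have ih₂ := (le_div_iff₀ pos₂).mp (ih ℓ₂ (by have := hΛ ℓ₁ h₁; omega) h₂)
    have hsQ : (s ℓ₁ : ℚ) + s ℓ₂ ≤ s h := by exact_mod_cast hs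
    have hcast : (h : ℚ) = ℓ₁ + ℓ₂ := by exact_mod_cast hsum.symm
    rw [le_div_iff₀ (by linarith), hcast]
    linarith

section LinearForm

variable {m n : ℕ} (q : ℕ) (d : Fin n → Fin m → ℤ) (b : Fin m → ℤ)

def linForm (t : ℕ) (v : Fin n → ℕ) (j : Fin m) : ℤ :=
  ∑ i, (v i : ℤ) * d i j + (∑ k ∈ range t, (q : ℤ) ^ k) * b j

theorem linForm_add_pow_mul (t s : ℕ) (v w : Fin n → ℕ) (j : Fin m) :
    linForm q d b (t + s) (fun i => v i + q ^ t * w i) j =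
      linForm q d b t v j + q ^ t * linForm q d b s w j := by
  simp only [linForm, Finset.sum_range_add, pow_add, Nat.cast_add, Nat.cast_mul, Nat.cast_pow,
    add_mul, mul_add, Finset.mul_sum, Finset.sum_add_distrib, Finset.sum_mul, mul_assoc]
  abel

theorem linForm_mod_add_div (t s : ℕ) (u : Fin n → ℕ) (j : Fin m) :
    linForm q d b (t + s) u j = linForm q d b t (fun i => u i % q ^ t) j +
      q ^ t * linForm q d b s (fun i => u i / q ^ t) j := by
  simpa only [Nat.mod_add_div] using linForm_add_pow_mul q d b t s (fun i => u i % q ^ t)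
    (fun i => u i / q ^ t) j

theorem mem_Lset_iff (hq : 2 ≤ q) {ℓ : ℕ} {u : Fin n → ℕ} :
    u ∈ Lset q ℓ d b ↔ (∀ i, u i < q ^ ℓ) ∧ ∀ j, ((q : ℤ) ^ ℓ - 1) ∣ linForm q d b ℓ u j := by
  have hdiv : ((q : ℤ) ^ ℓ - 1) / ((q : ℤ) - 1) = ∑ k ∈ range ℓ, (q : ℤ) ^ k := by
    rw [← geom_sum_mul, Int.mul_ediv_cancel]
    omega
  have hpos : 0 < q ^ ℓ := by positivity
  simp only [Lset, Set.mem_ofPred_eq, hdiv, linForm, Nat.le_sub_one_iff_lt hpos]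

end LinearForm

section CarryBox

variable {m n : ℕ} (d : Fin n → Fin m → ℤ)

def Dpos (j : Fin m) : ℤ := ∑ i ∈ Finset.univ.filter (fun i => 0 < d i j), d i j

def Dneg (j : Fin m) : ℤ := ∑ i ∈ Finset.univ.filter (fun i => d i j < 0), d i j

noncomputable def carryBox : Finset (Fin m → ℤ) :=
  Fintype.piFinset fun j => Icc (Dneg d j) (Dpos d j)

theorem card_carryBox : ((carryBox d).card : ℤ) = ∏ j, (Dpos d j - Dneg d j + 1) := by
  rw [carryBox, Fintype.card_piFinset, Nat.cast_prod]
  refine Finset.prod_congr rfl fun j _ => ?_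
  have hpos : 0 ≤ Dpos d j := Finset.sum_nonneg fun i hi => (Finset.mem_filter.mp hi).2.le
  have hneg : Dneg d j ≤ 0 := Finset.sum_nonpos fun i hi => (Finset.mem_filter.mp hi).2.le
  rw [Int.card_Icc, Int.toNat_of_nonneg (by omega)]
  ring

variable {w : Fin n → ℤ} {M : ℤ}

theorem mul_Dneg_le_sum_mul (hw : ∀ i, 0 ≤ w i ∧ w i ≤ M) (j : Fin m) :
    M * Dneg d j ≤ ∑ i, w i * d i j := by
  rw [Dneg, Finset.mul_sum, Finset.sum_filter]
  refine Finset.sum_le_sum fun i _ => ?_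
  split_ifs with h
  · exact mul_le_mul_of_nonpos_right (hw i).2 h.le
  · exact mul_nonneg (hw i).1 (not_lt.mp h)

theorem sum_mul_le_mul_Dpos (hw : ∀ i, 0 ≤ w i ∧ w i ≤ M) (j : Fin m) :
    ∑ i, w i * d i j ≤ M * Dpos d j := by
  rw [Dpos, Finset.mul_sum, Finset.sum_filter]
  refine Finset.sum_le_sum fun i _ => ?_
  split_ifs with h
  · exact mul_le_mul_of_nonneg_right (hw i).2 h.le
  · exact mul_nonpos_of_nonneg_of_nonpos (hw i).1 (not_lt.mp h)

end CarryBox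

theorem geom_sum_mul_lt {q : ℕ} {c : ℤ} (hc : 0 ≤ c ∧ c ≤ (q : ℤ) - 2) {t : ℕ} (ht : 1 ≤ t) :
    (∑ k ∈ range t, (q : ℤ) ^ k) * c < (q : ℤ) ^ t - 1 := by
  have hq : (2 : ℤ) ≤ q := by omega
  have hgeom := geom_sum_mul (q : ℤ) t
  have hqt : (q : ℤ) ≤ (q : ℤ) ^ t := le_self_pow₀ (by omega) (by omega)
  nlinarith

section Carries

variable {m n : ℕ} {q : ℕ} (d : Fin n → Fin m → ℤ) {b : Fin m → ℤ}

theorem linForm_mem_Ico (hb : ∀ j, 0 ≤ b j ∧ b j ≤ (q : ℤ) - 2) {t : ℕ} (ht : 1 ≤ t)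
    {v : Fin n → ℕ} (hv : ∀ i, v i < q ^ t) (j : Fin m) :
    ((q : ℤ) ^ t - 1) * Dneg d j ≤ linForm q d b t v j ∧
      linForm q d b t v j < ((q : ℤ) ^ t - 1) * (Dpos d j + 1) := by
  have hw : ∀ i, 0 ≤ (v i : ℤ) ∧ (v i : ℤ) ≤ (q : ℤ) ^ t - 1 := fun i =>
    ⟨by positivity, Int.le_sub_one_of_lt (by exact_mod_cast hv i)⟩
  have hlow := mul_Dneg_le_sum_mul d hw j
  have hup := sum_mul_le_mul_Dpos d hw j
  have hgeom := geom_sum_mul_lt (hb j) ht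
  have hgeom₀ : 0 ≤ (∑ k ∈ range t, (q : ℤ) ^ k) * b j :=
    mul_nonneg (Finset.sum_nonneg fun _ _ => by positivity) (hb j).1
  constructor <;> simp only [linForm] <;> linarith

theorem mem_carryBox_of_linForm_eq (hq : 2 ≤ q) (hb : ∀ j, 0 ≤ b j ∧ b j ≤ (q : ℤ) - 2)
    {ℓ : ℕ} (hℓ : 1 ≤ ℓ) {u : Fin n → ℕ} (hu : ∀ i, u i < q ^ ℓ) {c : Fin m → ℤ}
    (hc : ∀ j, linForm q d b ℓ u j = ((q : ℤ) ^ ℓ - 1) * c j) : c ∈ carryBox d := by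
  have hpos : (0 : ℤ) < (q : ℤ) ^ ℓ - 1 := by
    have : (q : ℤ) ≤ (q : ℤ) ^ ℓ := le_self_pow₀ (by omega) (by omega)
    omega
  simp only [carryBox, Fintype.mem_piFinset, Finset.mem_Icc]
  intro j
  obtain ⟨hlow, hup⟩ := linForm_mem_Ico d hb hℓ hu j
  rw [hc j] at hlow hup
  exact ⟨le_of_mul_le_mul_left hlow hpos, Int.lt_add_one_iff.mp (lt_of_mul_lt_mul_left hup hpos.le)⟩

variable (q b) in
/-- The carry out of the lowest `t` base-`q` digits of `u` in the equation
`linForm q d b ℓ u = (q ^ ℓ - 1) * c`. -/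
def carryAt (ℓ : ℕ) (u : Fin n → ℕ) (c : Fin m → ℤ) (t : ℕ) (j : Fin m) : ℤ :=
  q ^ (ℓ - t) * c j - linForm q d b (ℓ - t) (fun i => u i / q ^ t) j

theorem pow_mul_carryAt {ℓ t : ℕ} (ht : t ≤ ℓ) {u : Fin n → ℕ} {c : Fin m → ℤ}
    (hc : ∀ j, linForm q d b ℓ u j = ((q : ℤ) ^ ℓ - 1) * c j) (j : Fin m) :
    (q : ℤ) ^ t * carryAt q d b ℓ u c t j = linForm q d b t (fun i => u i % q ^ t) j + c j := by
  obtain ⟨s, rfl⟩ := Nat.exists_eq_add_of_le ht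
  have h := hc j
  rw [linForm_mod_add_div] at h
  simp only [carryAt, Nat.add_sub_cancel_left]
  linear_combination -h

theorem carryAt_mem_carryBox (hq : 2 ≤ q) (hb : ∀ j, 0 ≤ b j ∧ b j ≤ (q : ℤ) - 2)
    {ℓ t : ℕ} (ht : 1 ≤ t) (htℓ : t ≤ ℓ) {u : Fin n → ℕ} {c : Fin m → ℤ} (hcbox : c ∈ carryBox d)
    (hc : ∀ j, linForm q d b ℓ u j = ((q : ℤ) ^ ℓ - 1) * c j) :
    carryAt q d b ℓ u c t ∈ carryBox d := by
  have hpos : (0 : ℤ) < (q : ℤ) ^ t := by positivity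
  simp only [carryBox, Fintype.mem_piFinset, Finset.mem_Icc] at hcbox ⊢
  intro j
  obtain ⟨hlow, hup⟩ := linForm_mem_Ico d hb ht (fun i => Nat.mod_lt (u i) (by positivity)) j
  have h := pow_mul_carryAt d htℓ hc j
  obtain ⟨hc₁, hc₂⟩ := hcbox j
  constructor
  · refine le_of_mul_le_mul_left ?_ hpos
    linarith
  · refine Int.lt_add_one_iff.mp (lt_of_mul_lt_mul_left ?_ hpos.le)
    linarith

theorem exists_carryAt_eq (hq : 2 ≤ q) (hb : ∀ j, 0 ≤ b j ∧ b j ≤ (q : ℤ) - 2)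
    {ℓ : ℕ} (hℓ : (carryBox d).card < ℓ) {u : Fin n → ℕ} (hu : ∀ i, u i < q ^ ℓ)
    {c : Fin m → ℤ} (hc : ∀ j, linForm q d b ℓ u j = ((q : ℤ) ^ ℓ - 1) * c j) :
    ∃ t k, 1 ≤ t ∧ 1 ≤ k ∧ t + k ≤ ℓ ∧ carryAt q d b ℓ u c t = carryAt q d b ℓ u c (t + k) := by
  have hcbox := mem_carryBox_of_linForm_eq d hq hb (by omega) hu hc
  have hmaps : ∀ t ∈ Icc 1 ℓ, carryAt q d b ℓ u c t ∈ carryBox d := fun t ht =>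
    carryAt_mem_carryBox d hq hb (Finset.mem_Icc.mp ht).1 (Finset.mem_Icc.mp ht).2 hcbox hc
  obtain ⟨t₁, ht₁, t₂, ht₂, hne, heq⟩ :=
    Finset.exists_ne_map_eq_of_card_lt_of_maps_to (by simpa using hℓ) hmaps
  rw [Finset.mem_Icc] at ht₁ ht₂
  rcases Nat.lt_or_gt_of_ne hne with hlt | hlt
  · exact ⟨t₁, t₂ - t₁, ht₁.1, by omega, by omega, by rwa [Nat.add_sub_cancel' hlt.le]⟩
  · exact ⟨t₂, t₁ - t₂, ht₂.1, by omega, by omega, by rw [Nat.add_sub_cancel' hlt.le, heq]⟩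

theorem exists_split_of_carryAt_eq {p f : ℕ} (hp : 1 < p) (hf : 1 ≤ f) (hq : q = p ^ f)
    {ℓ t k : ℕ} (htk : t + k ≤ ℓ) {u : Fin n → ℕ} (hu : ∀ i, u i < q ^ ℓ) {c : Fin m → ℤ}
    (hc : ∀ j, linForm q d b ℓ u j = ((q : ℤ) ^ ℓ - 1) * c j)
    (heq : carryAt q d b ℓ u c t = carryAt q d b ℓ u c (t + k)) :
    ∃ y ∈ Lset q k d b, ∃ z ∈ Lset q (ℓ - k) d b,
      sigmaTuple p y + sigmaTuple p z = sigmaTuple p u := by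
  have hq₂ : 2 ≤ q := hq ▸ Nat.one_lt_pow (by omega) hp
  obtain ⟨r, rfl⟩ := Nat.exists_eq_add_of_le htk
  set a : Fin n → ℕ := fun i => u i % q ^ t
  set y : Fin n → ℕ := fun i => u i / q ^ t % q ^ k
  set w : Fin n → ℕ := fun i => u i / q ^ t / q ^ k
  have hw : ∀ i, w i < q ^ r := fun i => by
    rw [show w i = u i / q ^ t / q ^ k from rfl, Nat.div_div_eq_div_mul,
      Nat.div_lt_iff_lt_mul (by positivity), ← pow_add, ← pow_add]
    simpa [add_comm, add_left_comm] using hu i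
  have hshift : (fun i => u i / q ^ (t + k)) = w := by
    funext i; rw [pow_add, ← Nat.div_div_eq_div_mul]
  have hθt : ∀ j, carryAt q d b (t + k + r) u c t j =
      (q : ℤ) ^ (k + r) * c j - (linForm q d b k y j + q ^ k * linForm q d b r w j) := fun j => by
    rw [carryAt, ← linForm_mod_add_div, add_assoc, Nat.add_sub_cancel_left]
  have hθtk : ∀ j, carryAt q d b (t + k + r) u c (t + k) j =
      (q : ℤ) ^ r * c j - linForm q d b r w j := fun j => by
    rw [carryAt, Nat.add_sub_cancel_left, hshift]
  refine ⟨y, (mem_Lset_iff q d b hq₂).mpr ⟨fun i => Nat.mod_lt _ (by positivity), fun j =>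
      ⟨carryAt q d b (t + k + r) u c t j, ?_⟩⟩,
    fun i => a i + q ^ t * w i, (mem_Lset_iff q d b hq₂).mpr ⟨fun i => ?_, fun j => ⟨c j, ?_⟩⟩, ?_⟩
  · have h₁ := hθt j
    have h₂ := hθtk j
    rw [← congrFun heq j] at h₂
    linear_combination h₁ - (q : ℤ) ^ k * h₂
  · rw [show t + k + r - k = t + r by omega, pow_add]
    exact Nat.add_mul_lt_mul_of_lt_of_lt (Nat.mod_lt _ (by positivity)) (hw i)
  · have h₁ := pow_mul_carryAt d (t := t) (by omega) hc j
    have h₂ := hθtk j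
    rw [← congrFun heq j] at h₂
    rw [show t + k + r - k = t + r by omega, linForm_add_pow_mul]
    linear_combination (q : ℤ) ^ t * h₂ - h₁
  · rw [sigmaTuple_add_pow_mul hp hq (fun i => Nat.mod_lt _ (by positivity)),
      sigmaTuple_mod_add_div hp hq u t, sigmaTuple_mod_add_div hp hq (fun i => u i / q ^ t) k]
    ring

theorem exists_sigmaMin_add_le {p f : ℕ} (hp : 1 < p) (hf : 1 ≤ f) (hq : q = p ^ f)
    (hb : ∀ j, 0 ≤ b j ∧ b j ≤ (q : ℤ) - 2) {ℓ : ℕ} (hℓ : ℓ ∈ Lambda q d b)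
    (hbig : (carryBox d).card < ℓ) :
    ∃ ℓ₁ ∈ Lambda q d b, ∃ ℓ₂ ∈ Lambda q d b, ℓ₁ + ℓ₂ = ℓ ∧
      sigmaMin p q ℓ₁ d b + sigmaMin p q ℓ₂ d b ≤ sigmaMin p q ℓ d b := by
  have hq₂ : 2 ≤ q := hq ▸ Nat.one_lt_pow (by omega) hp
  obtain ⟨u, hu, hσu⟩ := Nat.sInf_mem (hℓ.2.image (sigmaTuple p))
  obtain ⟨hub, hdvd⟩ := (mem_Lset_iff q d b hq₂).mp hu
  choose c hc using hdvd
  obtain ⟨t, k, ht, hk, htk, heq⟩ := exists_carryAt_eq d hq₂ hb hbig hub hc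
  obtain ⟨y, hy, z, hz, hyz⟩ := exists_split_of_carryAt_eq d hp hf hq htk hub hc heq
  refine ⟨k, ⟨hk, y, hy⟩, ℓ - k, ⟨by omega, z, hz⟩, by omega, ?_⟩
  calc sigmaMin p q k d b + sigmaMin p q (ℓ - k) d b ≤ sigmaTuple p y + sigmaTuple p z :=
        add_le_add (Nat.sInf_le ⟨y, hy, rfl⟩) (Nat.sInf_le ⟨z, hz, rfl⟩)
    _ = sigmaMin p q ℓ d b := hyz.trans hσu

end Carries

theorem stmt13_general (p f m n : ℕ) (hp : p.Prime) (hf : 1 ≤ f)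
    (q : ℕ) (hq : q = p ^ f)
    (d : Fin n → Fin m → ℤ) (b : Fin m → ℤ) (hb : ∀ j, 0 ≤ b j ∧ b j ≤ (q : ℤ) - 2)
    (h : (Lambda q d b).Nonempty) :
    ∃ ℓ₀ ∈ Lambda q d b,
      (ℓ₀ : ℤ) ≤ ∏ j, ((∑ i ∈ Finset.univ.filter (fun i => 0 < d i j), d i j)
          - (∑ i ∈ Finset.univ.filter (fun i => d i j < 0), d i j) + 1) ∧
      ∀ h ∈ Lambda q d b,
        (sigmaMin p q ℓ₀ d b : ℚ) / (ℓ₀ : ℚ) ≤ (sigmaMin p q h d b : ℚ) / (h : ℚ) := by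
  obtain ⟨ℓ₀, hℓ₀, hle, hmin⟩ := exists_le_forall_div_le_of_split (fun ℓ hℓ => hℓ.1)
    (fun ℓ => sigmaMin p q ℓ d b) (carryBox d).card
    (fun ℓ hℓ hbig => exists_sigmaMin_add_le d hp.one_lt hf hq hb hℓ hbig) h
  refine ⟨ℓ₀, hℓ₀, ?_, hmin⟩
  calc (ℓ₀ : ℤ) ≤ (carryBox d).card := by exact_mod_cast hle
    _ = _ := card_carryBox d

/-- If `Λ(D, b)` is nonempty, then `{σ(D, q^ℓ, b_ℓ)/ℓ : ℓ ∈ Λ(D, b)}` has a minimum,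
attained at some `ℓ₀ ∈ Λ(D, b)` with `ℓ₀ ≤ ∏_j (D_j^+ − D_j^- + 1)`. -/
theorem stmt13 (p f m n : ℕ) (hp : p.Prime) (hf : 1 ≤ f) (hm : 1 ≤ m) (hn : 1 ≤ n)
    (q : ℕ) (hq : q = p ^ f)
    (d : Fin n → Fin m → ℤ) (b : Fin m → ℤ) (hb : ∀ j, 0 ≤ b j ∧ b j ≤ (q : ℤ) - 2)
    (h : (Lambda q d b).Nonempty) :
    ∃ ℓ₀ ∈ Lambda q d b,
      (ℓ₀ : ℤ) ≤ ∏ j, ((∑ i ∈ Finset.univ.filter (fun i => 0 < d i j), d i j)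
          - (∑ i ∈ Finset.univ.filter (fun i => d i j < 0), d i j) + 1) ∧
      ∀ h ∈ Lambda q d b,
        (sigmaMin p q ℓ₀ d b : ℚ) / (ℓ₀ : ℚ) ≤ (sigmaMin p q h d b : ℚ) / (h : ℚ) :=
  stmt13_general p f m n hp hf q hq d b hb h
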